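/- Let β > 0, k₀ > 0, and k = k₀ + l·e^{iπ/6} for l ≥ 0. Then Re(2i(16βk⁵ - 80βk₀⁴·k)) = -16βl²(l³ + 5√3 k₀l² + 20k₀²l + 10√3 k₀³), and in particular Re(2i(16βk⁵ - 80βk₀⁴k)) ≤ -16β|k - k₀|⁵. -/

import Mathlib

open Real

/-!
Write `k = k₀ + l ω` with `ω = e^{iπ/6}`. Since `k₀` is a stationary point of
`k ↦ k⁵ - 5k₀⁴k`, the binomial expansion has no term linear in `l`, and
`Re(2i·16β(k⁵ - 5k₀⁴k)) = -32β Σ_{n=2}^{5} c_n k₀^{5-n} lⁿ sin(nπ/6)` with positive `c_n`.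
All these sines are positive, so dropping every term but `l⁵` gives the bound, and `|k - k₀| = l`.
-/

namespace Complex

theorem exp_I_mul_pi_div_six :
    exp (I * (π / 6)) = ((√3 / 2 : ℝ) : ℂ) + ((1 / 2 : ℝ) : ℂ) * I := by
  rw [mul_comm, exp_mul_I, ← ofReal_ofNat, ← ofReal_div, ← ofReal_cos, ← ofReal_sin,
    Real.cos_pi_div_six, Real.sin_pi_div_six]

theorem re_add_mul_exp_I_mul_pi_div_six (a l : ℝ) :
    ((a : ℂ) + l * exp (I * (π / 6))).re = a + l * (√3 / 2) := by
  simp [exp_I_mul_pi_div_six]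

theorem im_add_mul_exp_I_mul_pi_div_six (a l : ℝ) :
    ((a : ℂ) + l * exp (I * (π / 6))).im = l / 2 := by
  rw [exp_I_mul_pi_div_six]
  simp [div_eq_mul_inv]

theorem norm_add_mul_exp_I_mul_pi_div_six_sub (a l : ℝ) :
    ‖(a : ℂ) + l * exp (I * (π / 6)) - a‖ = |l| := by
  rw [add_sub_cancel_left, norm_mul, ← ofReal_ofNat, ← ofReal_div, norm_exp_I_mul_ofReal,
    mul_one, norm_real, Real.norm_eq_abs]

end Complex

open Complex in
theorem re_theta_ray_pi_div_six (β k₀ l : ℝ) :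
    (2 * I * (16 * (β : ℂ) * ((k₀ : ℂ) + l * exp (I * (π / 6))) ^ 5
        - 80 * (β : ℂ) * (k₀ : ℂ) ^ 4 * ((k₀ : ℂ) + l * exp (I * (π / 6))))).re =
      -16 * β * l ^ 2 * (l ^ 3 + 5 * √3 * k₀ * l ^ 2 + 20 * k₀ ^ 2 * l + 10 * √3 * k₀ ^ 3) := by
  have hre := re_add_mul_exp_I_mul_pi_div_six k₀ l
  have him := im_add_mul_exp_I_mul_pi_div_six k₀ l
  generalize (k₀ : ℂ) + l * exp (I * (π / 6)) = k at hre him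
  simp only [pow_succ, pow_zero, one_mul, mul_re, mul_im, sub_re, sub_im, I_re, I_im,
    ofReal_re, ofReal_im, re_ofNat, im_ofNat, hre, him]
  have hsqrt : √3 ^ 2 = 3 := sq_sqrt (by norm_num)
  linear_combination
    β * (-5 * l ^ 5 * √3 ^ 2 - 40 * k₀ * l ^ 4 * √3 - 120 * k₀ ^ 2 * l ^ 3 - 5 * l ^ 5) * hsqrt

theorem neg_mul_ray_poly_le {β k₀ l : ℝ} (hβ : 0 ≤ β) (hk₀ : 0 ≤ k₀) (hl : 0 ≤ l) :
    -16 * β * l ^ 2 * (l ^ 3 + 5 * √3 * k₀ * l ^ 2 + 20 * k₀ ^ 2 * l + 10 * √3 * k₀ ^ 3) ≤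
      -16 * β * l ^ 5 := by
  have hlower : 0 ≤ 5 * √3 * k₀ * l ^ 2 + 20 * k₀ ^ 2 * l + 10 * √3 * k₀ ^ 3 := by positivity
  have hscale : 0 ≤ 16 * β * l ^ 2 := by positivity
  nlinarith [mul_nonneg hscale hlower]

/-- Along the ray k = k₀ + l e^{iπ/6}, l ≥ 0, the real part of
θ(k) = 2i(16βk⁵ - 80βk₀⁴k) equals -16βl²(l³ + 5√3 k₀l² + 20k₀²l + 10√3 k₀³),
and in particular is at most -16β|k - k₀|⁵. -/
theorem stmt3 (β k₀ l : ℝ) (hβ : 0 < β) (hk₀ : 0 < k₀) (hl : 0 ≤ l)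
    (k : ℂ) (hk : k = (k₀ : ℂ) + (l : ℂ) * Complex.exp (Complex.I * (Real.pi / 6))) :
    (2 * Complex.I * (16 * (β : ℂ) * k ^ 5 - 80 * (β : ℂ) * (k₀ : ℂ) ^ 4 * k)).re =
      -16 * β * l ^ 2 * (l ^ 3 + 5 * Real.sqrt 3 * k₀ * l ^ 2 + 20 * k₀ ^ 2 * l
        + 10 * Real.sqrt 3 * k₀ ^ 3) ∧
    (2 * Complex.I * (16 * (β : ℂ) * k ^ 5 - 80 * (β : ℂ) * (k₀ : ℂ) ^ 4 * k)).re ≤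
      -16 * β * ‖k - (k₀ : ℂ)‖ ^ 5 := by
  subst hk
  have hre := re_theta_ray_pi_div_six β k₀ l
  refine ⟨hre, ?_⟩
  rw [hre, Complex.norm_add_mul_exp_I_mul_pi_div_six_sub, abs_of_nonneg hl]
  exact neg_mul_ray_poly_le hβ.le hk₀.le hl
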